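/- arXiv:1108.0634 — 2 statements merged into one kernel-verified Lean document; each statement's English description precedes it below -/
import Mathlib

section
/- Soundness of the Kuroda negative translation: if classical logic proves A from assumptions Γ, then intuitionistic logic proves ¬¬A* from the set {¬¬G* : G ∈ Γ}, where the Kuroda inner translation (·)* maps atomic P to P, commutes with ∧, ∨, →, ∃, and maps (∀x A) to ∀x ¬¬A*. -/
/-- First-order formulas over domain `α`, with HOAS quantifiers.
`bot` is an ordinary atom with no special rules in minimal logic. -/
inductive Formula (α : Type) : Type where
  | atom : ℕ → List α → Formula α
  | bot : Formula α
  | and : Formula α → Formula α → Formula α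
  | or : Formula α → Formula α → Formula α
  | imp : Formula α → Formula α → Formula α
  | all : (α → Formula α) → Formula α
  | ex : (α → Formula α) → Formula α

/-- Negation: `¬A ≡ A → ⊥`. -/
def Formula.neg {α : Type} (A : Formula α) : Formula α := A.imp .bot

/-- Biconditional. -/
def Formula.iff {α : Type} (A B : Formula α) : Formula α := (A.imp B).and (B.imp A)

/-- Minimal first-order logic: natural deduction without ex falso quodlibet. -/
inductive ML {α : Type} : Set (Formula α) → Formula α → Prop where
  | ax {Γ : Set (Formula α)} {A : Formula α} : A ∈ Γ → ML Γ A
  | impI {Γ : Set (Formula α)} {A B : Formula α} : ML (insert A Γ) B → ML Γ (A.imp B)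
  | impE {Γ : Set (Formula α)} {A B : Formula α} : ML Γ (A.imp B) → ML Γ A → ML Γ B
  | andI {Γ : Set (Formula α)} {A B : Formula α} : ML Γ A → ML Γ B → ML Γ (A.and B)
  | andE1 {Γ : Set (Formula α)} {A B : Formula α} : ML Γ (A.and B) → ML Γ A
  | andE2 {Γ : Set (Formula α)} {A B : Formula α} : ML Γ (A.and B) → ML Γ B
  | orI1 {Γ : Set (Formula α)} {A B : Formula α} : ML Γ A → ML Γ (A.or B)
  | orI2 {Γ : Set (Formula α)} {A B : Formula α} : ML Γ B → ML Γ (A.or B)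
  | orE {Γ : Set (Formula α)} {A B C : Formula α} : ML Γ (A.or B) → ML (insert A Γ) C → ML (insert B Γ) C → ML Γ C
  | allI {Γ : Set (Formula α)} {f : α → Formula α} : (∀ a, ML Γ (f a)) → ML Γ (.all f)
  | allE {Γ f} (a : α) : ML Γ (.all f) → ML Γ (f a)
  | exI {Γ f} (a : α) : ML Γ (f a) → ML Γ (.ex f)
  | exE {Γ : Set (Formula α)} {f : α → Formula α} {C : Formula α} : ML Γ (.ex f) → (∀ a, ML (insert (f a) Γ) C) → ML Γ C

/-- Intuitionistic first-order logic: minimal logic plus ex falso quodlibet. -/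
inductive IL {α : Type} : Set (Formula α) → Formula α → Prop where
  | ax {Γ : Set (Formula α)} {A : Formula α} : A ∈ Γ → IL Γ A
  | impI {Γ : Set (Formula α)} {A B : Formula α} : IL (insert A Γ) B → IL Γ (A.imp B)
  | impE {Γ : Set (Formula α)} {A B : Formula α} : IL Γ (A.imp B) → IL Γ A → IL Γ B
  | andI {Γ : Set (Formula α)} {A B : Formula α} : IL Γ A → IL Γ B → IL Γ (A.and B)
  | andE1 {Γ : Set (Formula α)} {A B : Formula α} : IL Γ (A.and B) → IL Γ A
  | andE2 {Γ : Set (Formula α)} {A B : Formula α} : IL Γ (A.and B) → IL Γ B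
  | orI1 {Γ : Set (Formula α)} {A B : Formula α} : IL Γ A → IL Γ (A.or B)
  | orI2 {Γ : Set (Formula α)} {A B : Formula α} : IL Γ B → IL Γ (A.or B)
  | orE {Γ : Set (Formula α)} {A B C : Formula α} : IL Γ (A.or B) → IL (insert A Γ) C → IL (insert B Γ) C → IL Γ C
  | allI {Γ : Set (Formula α)} {f : α → Formula α} : (∀ a, IL Γ (f a)) → IL Γ (.all f)
  | allE {Γ f} (a : α) : IL Γ (.all f) → IL Γ (f a)
  | exI {Γ f} (a : α) : IL Γ (f a) → IL Γ (.ex f)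
  | exE {Γ : Set (Formula α)} {f : α → Formula α} {C : Formula α} : IL Γ (.ex f) → (∀ a, IL (insert (f a) Γ) C) → IL Γ C
  | efq {Γ : Set (Formula α)} {A : Formula α} : IL Γ .bot → IL Γ A

/-- Classical first-order logic: minimal logic plus double negation elimination. -/
inductive CL {α : Type} : Set (Formula α) → Formula α → Prop where
  | ax {Γ : Set (Formula α)} {A : Formula α} : A ∈ Γ → CL Γ A
  | impI {Γ : Set (Formula α)} {A B : Formula α} : CL (insert A Γ) B → CL Γ (A.imp B)
  | impE {Γ : Set (Formula α)} {A B : Formula α} : CL Γ (A.imp B) → CL Γ A → CL Γ B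
  | andI {Γ : Set (Formula α)} {A B : Formula α} : CL Γ A → CL Γ B → CL Γ (A.and B)
  | andE1 {Γ : Set (Formula α)} {A B : Formula α} : CL Γ (A.and B) → CL Γ A
  | andE2 {Γ : Set (Formula α)} {A B : Formula α} : CL Γ (A.and B) → CL Γ B
  | orI1 {Γ : Set (Formula α)} {A B : Formula α} : CL Γ A → CL Γ (A.or B)
  | orI2 {Γ : Set (Formula α)} {A B : Formula α} : CL Γ B → CL Γ (A.or B)
  | orE {Γ : Set (Formula α)} {A B C : Formula α} : CL Γ (A.or B) → CL (insert A Γ) C → CL (insert B Γ) C → CL Γ C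
  | allI {Γ : Set (Formula α)} {f : α → Formula α} : (∀ a, CL Γ (f a)) → CL Γ (.all f)
  | allE {Γ f} (a : α) : CL Γ (.all f) → CL Γ (f a)
  | exI {Γ f} (a : α) : CL Γ (f a) → CL Γ (.ex f)
  | exE {Γ : Set (Formula α)} {f : α → Formula α} {C : Formula α} : CL Γ (.ex f) → (∀ a, CL (insert (f a) Γ) C) → CL Γ C
  | dne {Γ : Set (Formula α)} {A : Formula α} : CL Γ A.neg.neg → CL Γ A

/-- The Kuroda inner translation: atoms unchanged, commutes with ∧, ∨, →, ∃,
and `(∀x A)* ≡ ∀x ¬¬A*`. -/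
def kuroda {α : Type} : Formula α → Formula α
  | .atom n ts => .atom n ts
  | .bot => .bot
  | .and A B => (kuroda A).and (kuroda B)
  | .or A B => (kuroda A).or (kuroda B)
  | .imp A B => (kuroda A).imp (kuroda B)
  | .all f => .all (fun a => (kuroda (f a)).neg.neg)
  | .ex f => .ex (fun a => kuroda (f a))


namespace ILHelpers

variable {α : Type}

theorem weak {Γ Γ' : Set (Formula α)} {A : Formula α} (h : IL Γ A) (hs : Γ ⊆ Γ') :
    IL Γ' A := by
  induction h generalizing Γ' with
  | ax hm => exact .ax (hs hm)
  | impI _ ih => exact .impI (ih (Set.insert_subset_insert hs))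
  | impE _ _ ih1 ih2 => exact .impE (ih1 hs) (ih2 hs)
  | andI _ _ ih1 ih2 => exact .andI (ih1 hs) (ih2 hs)
  | andE1 _ ih => exact .andE1 (ih hs)
  | andE2 _ ih => exact .andE2 (ih hs)
  | orI1 _ ih => exact .orI1 (ih hs)
  | orI2 _ ih => exact .orI2 (ih hs)
  | orE _ _ _ ih ih1 ih2 =>
      exact .orE (ih hs) (ih1 (Set.insert_subset_insert hs)) (ih2 (Set.insert_subset_insert hs))
  | allI _ ih => exact .allI (fun a => ih a hs)
  | allE a _ ih => exact .allE a (ih hs)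
  | exI a _ ih => exact .exI a (ih hs)
  | exE _ _ ih ihs => exact .exE (ih hs) (fun a => ihs a (Set.insert_subset_insert hs))
  | efq _ ih => exact .efq (ih hs)

theorem w1 {Γ : Set (Formula α)} {A B : Formula α} (h : IL Γ A) : IL (insert B Γ) A :=
  weak h (Set.subset_insert _ _)

theorem ax0 {Γ : Set (Formula α)} {A : Formula α} : IL (insert A Γ) A :=
  .ax (Set.mem_insert _ _)

theorem dni {Γ : Set (Formula α)} {A : Formula α} (h : IL Γ A) : IL Γ A.neg.neg :=
  .impI (.impE ax0 (w1 h))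

theorem cut {Γ : Set (Formula α)} {A B : Formula α} (hA : IL Γ A)
    (hB : IL (insert A Γ) B) : IL Γ B :=
  .impE (.impI hB) hA

/-- Monadic bind for double negation. -/
theorem ax1 {Γ : Set (Formula α)} {A B : Formula α} : IL (insert A (insert B Γ)) B :=
  .ax (Set.mem_insert_of_mem _ (Set.mem_insert _ _))

theorem nn_bind {Γ : Set (Formula α)} {A B : Formula α} (hA : IL Γ A.neg.neg)
    (h : IL (insert A Γ) B.neg.neg) : IL Γ B.neg.neg := by
  refine .impI (.impE (w1 hA) (.impI ?_))
  refine .impE (weak h ?_) ax1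
  intro x hx
  rcases hx with rfl | hx
  · exact Set.mem_insert _ _
  · exact Set.mem_insert_of_mem _ (Set.mem_insert_of_mem _ hx)

end ILHelpers

/-- Soundness of the Kuroda negative translation: if `CL + Γ ⊢ A` then
`IL + ¬¬Γ* ⊢ ¬¬A*`. -/
theorem kuroda_soundness {α : Type} (Γ : Set (Formula α)) (A : Formula α)
    (h : CL Γ A) : IL ((fun G => (kuroda G).neg.neg) '' Γ) ((kuroda A).neg.neg) := by
  open ILHelpers in
  induction h with
  | ax hm => exact .ax ⟨_, hm, rfl⟩
  | @impI Γ A B h ih =>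
      show IL _ ((kuroda A).imp (kuroda B)).neg.neg
      refine .impI ?_
      have hnnA : IL (insert ((kuroda A).imp (kuroda B)).neg
          ((fun G => (kuroda G).neg.neg) '' Γ)) (kuroda A).neg.neg := by
        refine .impI (.impE (w1 ax0) (.impI (.efq (.impE (w1 ax0) ax0))))
      rw [Set.image_insert_eq] at ih
      have hnnB := cut hnnA (weak ih
        (Set.insert_subset_insert (Set.subset_insert _ _)))
      refine .impE hnnB (.impI (.impE (w1 ax0) (.impI (w1 ax0))))
  | impE _ _ ih1 ih2 =>
      exact nn_bind ih1 (nn_bind (w1 ih2) (dni (.impE (w1 ax0) ax0)))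
  | andI _ _ ih1 ih2 =>
      exact nn_bind ih1 (nn_bind (w1 ih2) (dni (.andI (w1 ax0) ax0)))
  | andE1 _ ih => exact nn_bind ih (dni (.andE1 ax0))
  | andE2 _ ih => exact nn_bind ih (dni (.andE2 ax0))
  | orI1 _ ih => exact nn_bind ih (dni (.orI1 ax0))
  | orI2 _ ih => exact nn_bind ih (dni (.orI2 ax0))
  | orE _ _ _ ih ih1 ih2 =>
      rw [Set.image_insert_eq] at ih1 ih2
      refine nn_bind ih (.orE ax0 ?_ ?_)
      · exact cut (dni ax0) (weak ih1 (Set.insert_subset_insert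
          ((Set.subset_insert _ _).trans (Set.subset_insert _ _))))
      · exact cut (dni ax0) (weak ih2 (Set.insert_subset_insert
          ((Set.subset_insert _ _).trans (Set.subset_insert _ _))))
  | allI _ ih => exact dni (.allI (fun a => ih a))
  | allE a _ ih => exact nn_bind ih (.allE a ax0)
  | exI a _ ih => exact nn_bind ih (dni (.exI a ax0))
  | exE _ _ ih ihs =>
      refine nn_bind ih (.exE ax0 (fun a => ?_))
      have h := ihs a
      rw [Set.image_insert_eq] at h
      exact cut (dni ax0) (weak h (Set.insert_subset_insert
        ((Set.subset_insert _ _).trans (Set.subset_insert _ _))))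
  | dne _ ih => exact nn_bind ih ax0
end

section
/- Composition identity for the variant K2: minimal logic proves T2(K(A)) ↔ K2(A) for every formula A, where K is the Kuroda translation, T2 is the translation doubling-negating atoms, and K2 is the K2 variant of the Kuroda translation. -/
/-- Leivant's translation T2: atoms `P` go to `¬¬P`, commutes with everything else. -/
def leivantTwo {α : Type} : Formula α → Formula α
  | .atom n ts => (Formula.atom n ts).neg.neg
  | .bot => (Formula.bot).neg.neg
  | .and A B => (leivantTwo A).and (leivantTwo B)
  | .or A B => (leivantTwo A).or (leivantTwo B)
  | .imp A B => (leivantTwo A).imp (leivantTwo B)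
  | .all f => .all (fun a => leivantTwo (f a))
  | .ex f => .ex (fun a => leivantTwo (f a))

/-- Inner translation of K2: atoms `P` go to `¬¬P`, otherwise as Kuroda. -/
def kurodaTwo {α : Type} : Formula α → Formula α
  | .atom n ts => (Formula.atom n ts).neg.neg
  | .bot => (Formula.bot).neg.neg
  | .and A B => (kurodaTwo A).and (kurodaTwo B)
  | .or A B => (kurodaTwo A).or (kurodaTwo B)
  | .imp A B => (kurodaTwo A).imp (kurodaTwo B)
  | .all f => .all (fun a => (kurodaTwo (f a)).neg.neg)
  | .ex f => .ex (fun a => kurodaTwo (f a))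


namespace MLAux

lemma weaken {α : Type} {Γ Δ : Set (Formula α)} {A : Formula α}
    (h : ML Γ A) (hs : Γ ⊆ Δ) : ML Δ A := by
  induction h generalizing Δ with
  | ax h => exact .ax (hs h)
  | impI _ ih => exact .impI (ih (Set.insert_subset_insert hs))
  | impE _ _ ih1 ih2 => exact .impE (ih1 hs) (ih2 hs)
  | andI _ _ ih1 ih2 => exact .andI (ih1 hs) (ih2 hs)
  | andE1 _ ih => exact .andE1 (ih hs)
  | andE2 _ ih => exact .andE2 (ih hs)
  | orI1 _ ih => exact .orI1 (ih hs)
  | orI2 _ ih => exact .orI2 (ih hs)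
  | orE _ _ _ ih ih1 ih2 =>
      exact .orE (ih hs) (ih1 (Set.insert_subset_insert hs))
        (ih2 (Set.insert_subset_insert hs))
  | allI _ ih => exact .allI (fun a => ih a hs)
  | allE a _ ih => exact .allE a (ih hs)
  | exI a _ ih => exact .exI a (ih hs)
  | exE _ _ ih ihs =>
      exact .exE (ih hs) (fun a => ihs a (Set.insert_subset_insert hs))

lemma wk1 {α : Type} {Γ : Set (Formula α)} {A B : Formula α}
    (h : ML Γ A) : ML (insert B Γ) A :=
  weaken h (Set.subset_insert _ _)

lemma ax0 {α : Type} {Γ : Set (Formula α)} {A : Formula α} :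
    ML (insert A Γ) A := .ax (Set.mem_insert _ _)

lemma iffI {α : Type} {Γ : Set (Formula α)} {A B : Formula α}
    (h1 : ML (insert A Γ) B) (h2 : ML (insert B Γ) A) : ML Γ (A.iff B) :=
  .andI (.impI h1) (.impI h2)

lemma iff_mp {α : Type} {Γ : Set (Formula α)} {A B : Formula α}
    (h : ML Γ (A.iff B)) (hA : ML Γ A) : ML Γ B :=
  .impE (.andE1 h) hA

lemma iff_mpr {α : Type} {Γ : Set (Formula α)} {A B : Formula α}
    (h : ML Γ (A.iff B)) (hB : ML Γ B) : ML Γ A :=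
  .impE (.andE2 h) hB

lemma iff_refl {α : Type} {Γ : Set (Formula α)} {A : Formula α} :
    ML Γ (A.iff A) := iffI ax0 ax0

lemma imp_cong {α : Type} {Γ : Set (Formula α)} {A A' B B' : Formula α}
    (hA : ML Γ (A.iff A')) (hB : ML Γ (B.iff B')) :
    ML Γ ((A.imp B).iff (A'.imp B')) := by
  refine iffI (.impI ?_) (.impI ?_)
  · exact iff_mp (wk1 (wk1 hB))
      (.impE (wk1 ax0) (iff_mpr (wk1 (wk1 hA)) ax0))
  · exact iff_mpr (wk1 (wk1 hB))
      (.impE (wk1 ax0) (iff_mp (wk1 (wk1 hA)) ax0))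

lemma and_cong {α : Type} {Γ : Set (Formula α)} {A A' B B' : Formula α}
    (hA : ML Γ (A.iff A')) (hB : ML Γ (B.iff B')) :
    ML Γ ((A.and B).iff (A'.and B')) := by
  refine iffI ?_ ?_
  · exact .andI (iff_mp (wk1 hA) (.andE1 ax0)) (iff_mp (wk1 hB) (.andE2 ax0))
  · exact .andI (iff_mpr (wk1 hA) (.andE1 ax0)) (iff_mpr (wk1 hB) (.andE2 ax0))

lemma or_cong {α : Type} {Γ : Set (Formula α)} {A A' B B' : Formula α}
    (hA : ML Γ (A.iff A')) (hB : ML Γ (B.iff B')) :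
    ML Γ ((A.or B).iff (A'.or B')) := by
  refine iffI ?_ ?_
  · exact .orE ax0 (.orI1 (iff_mp (wk1 (wk1 hA)) ax0))
      (.orI2 (iff_mp (wk1 (wk1 hB)) ax0))
  · exact .orE ax0 (.orI1 (iff_mpr (wk1 (wk1 hA)) ax0))
      (.orI2 (iff_mpr (wk1 (wk1 hB)) ax0))

lemma all_cong {α : Type} {Γ : Set (Formula α)} {f g : α → Formula α}
    (h : ∀ a, ML Γ ((f a).iff (g a))) :
    ML Γ ((Formula.all f).iff (Formula.all g)) := by
  refine iffI ?_ ?_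
  · exact .allI (fun a => iff_mp (wk1 (h a)) (.allE a ax0))
  · exact .allI (fun a => iff_mpr (wk1 (h a)) (.allE a ax0))

lemma ex_cong {α : Type} {Γ : Set (Formula α)} {f g : α → Formula α}
    (h : ∀ a, ML Γ ((f a).iff (g a))) :
    ML Γ ((Formula.ex f).iff (Formula.ex g)) := by
  refine iffI ?_ ?_
  · exact .exE ax0 (fun a => .exI a (iff_mp (wk1 (wk1 (h a))) ax0))
  · exact .exE ax0 (fun a => .exI a (iff_mpr (wk1 (wk1 (h a))) ax0))

/-- `¬¬⊥ ↔ ⊥` in minimal logic. -/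
lemma botnn_iff {α : Type} {Γ : Set (Formula α)} :
    ML Γ ((Formula.bot (α := α)).neg.neg.iff .bot) := by
  refine iffI ?_ ?_
  · exact .impE ax0 (.impI ax0)
  · exact .impI (.impE ax0 (wk1 ax0))

lemma inner {α : Type} {Γ : Set (Formula α)} (A : Formula α) :
    ML Γ ((leivantTwo (kuroda A)).iff (kurodaTwo A)) := by
  induction A with
  | atom n ts => exact iff_refl
  | bot => exact iff_refl
  | and A B ihA ihB => exact and_cong ihA ihB
  | or A B ihA ihB => exact or_cong ihA ihB
  | imp A B ihA ihB => exact imp_cong ihA ihB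
  | all f ih =>
      exact all_cong (fun a => imp_cong (imp_cong (ih a) botnn_iff) botnn_iff)
  | ex f ih => exact ex_cong ih

end MLAux

/-- Composition identity for K2: `ML ⊢ T2(K(A)) ↔ K2(A)`. -/
theorem leivantTwo_kuroda_iff_kurodaTwo {α : Type} (A : Formula α) :
    ML (∅ : Set (Formula α))
      ((leivantTwo ((kuroda A).neg.neg)).iff ((kurodaTwo A).neg.neg)) := by
  exact MLAux.imp_cong (MLAux.imp_cong (MLAux.inner A) MLAux.botnn_iff) MLAux.botnn_iff
end
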